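/- arXiv:math/0010298 — 2 statements merged into one kernel-verified Lean document; each statement's English description precedes it below -/
import Mathlib

section
/- Let M be a real 4×3 matrix satisfying Mᵀ·Q_D·M = diag(0,2,2), and suppose that every entry M_{i,1} of the first column of M is nonzero. Set b_i := M_{i,1} and x_i := (M_{i,2}/b_i, M_{i,3}/b_i) ∈ ℝ². Then for all i ≠ j one has ‖x_i − x_j‖² = (1/b_i + 1/b_j)²; that is, M is the curvature-center coordinate matrix of an ordered, oriented Descartes configuration of four pairwise compatibly tangent circles. -/
/-!
Write `b, w, z` for the columns of `M` and `⟨x, y⟩ = xᵀ Q_D y`. Since `b` is isotropic and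
nonzero, its coordinate sum is nonzero, and this lets one solve `⟨v, b⟩ = 1`,
`⟨v, w⟩ = ⟨v, z⟩ = 0` explicitly. The square matrix `W = [v | b | w | z]` then has an invertible
Gram matrix `G = Wᵀ Q_D W`, so `W G⁻¹ Wᵀ = Q_D⁻¹ = Q_D`. The entries `(i,i)`, `(j,j)`, `(i,j)` of
this identity combine, with `v` cancelling, into
`(w_i b_j - w_j b_i)² + (z_i b_j - z_j b_i)² = (b_i + b_j)²`.
-/

open Matrix

/-- The matrix of the Descartes quadratic form: diagonal entries `1/2`,
off-diagonal entries `-1/2`. -/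
noncomputable def QD : Matrix (Fin 4) (Fin 4) ℝ :=
  Matrix.of fun i j => if i = j then 1/2 else -1/2

theorem QD_apply_self (i : Fin 4) : QD i i = 1 / 2 := if_pos rfl

theorem QD_apply_of_ne {i j : Fin 4} (h : i ≠ j) : QD i j = -1 / 2 := if_neg h

theorem QD_transpose : QDᵀ = QD := by
  ext i j
  simp only [QD, transpose_apply, of_apply, eq_comm]

theorem QD_mul_self : QD * QD = 1 := by
  ext i j
  fin_cases i <;> fin_cases j <;> simp [QD, mul_apply, Fin.sum_univ_four, one_apply] <;> norm_num

theorem vecMul_QD_dotProduct (x y : Fin 4 → ℝ) :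
    x ᵥ* QD ⬝ᵥ y = x ⬝ᵥ y - (∑ i, x i) * (∑ i, y i) / 2 := by
  simp only [dotProduct, vecMul, QD, of_apply, mul_ite, Fin.sum_univ_four, ↓reduceIte,
    Fin.reduceEq]
  ring

theorem vecMul_QD_dotProduct_comm (x y : Fin 4 → ℝ) : x ᵥ* QD ⬝ᵥ y = y ᵥ* QD ⬝ᵥ x := by
  rw [dotProduct_comm, ← dotProduct_mulVec, ← vecMul_transpose, QD_transpose]

theorem one_vecMul_QD_dotProduct (y : Fin 4 → ℝ) : 1 ᵥ* QD ⬝ᵥ y = -∑ i, y i := by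
  rw [vecMul_QD_dotProduct, one_dotProduct]
  simp only [Pi.one_apply, Finset.sum_const, Finset.card_univ, Fintype.card_fin, nsmul_eq_mul]
  ring

theorem Matrix.mul_mul_transpose_apply {l m n R : Type*} [Fintype m] [CommSemiring R]
    (A : Matrix l m R) (Q : Matrix m m R) (B : Matrix n m R) (k : l) (k' : n) :
    (A * Q * Bᵀ) k k' = A k ᵥ* Q ⬝ᵥ B k' := by
  simp [mul_apply, vecMul, dotProduct, Finset.sum_mul]

theorem Matrix.mul_mul_transpose_eq_of_transpose_mul_mul_eq {n R : Type*} [Fintype n]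
    [DecidableEq n] [CommRing R] {Q Q' G H W : Matrix n n R} (hQ : Q * Q' = 1)
    (hW : Wᵀ * Q * W = G) (hH : H * G = 1) : W * H * Wᵀ = Q' := by
  have hleft : H * Wᵀ * Q * W = 1 := by
    rw [Matrix.mul_assoc, Matrix.mul_assoc, ← Matrix.mul_assoc Wᵀ, hW, hH]
  have hright : W * H * Wᵀ * Q = 1 := by
    simpa only [Matrix.mul_assoc] using mul_eq_one_comm.mp hleft
  calc W * H * Wᵀ = W * H * Wᵀ * Q * Q' := by rw [Matrix.mul_assoc _ Q, hQ, Matrix.mul_one]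
    _ = Q' := by rw [hright, Matrix.one_mul]

theorem exists_vecMul_QD_dotProduct_eq {b w z : Fin 4 → ℝ} (hb : b ≠ 0)
    (hbb : b ᵥ* QD ⬝ᵥ b = 0) (hwb : w ᵥ* QD ⬝ᵥ b = 0) (hzb : z ᵥ* QD ⬝ᵥ b = 0)
    (hww : w ᵥ* QD ⬝ᵥ w = 2) (hzw : z ᵥ* QD ⬝ᵥ w = 0) (hzz : z ᵥ* QD ⬝ᵥ z = 2) :
    ∃ v, v ᵥ* QD ⬝ᵥ b = 1 ∧ v ᵥ* QD ⬝ᵥ w = 0 ∧ v ᵥ* QD ⬝ᵥ z = 0 := by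
  have hs : ∑ i, b i ≠ 0 := by
    intro hs
    rw [vecMul_QD_dotProduct, hs, zero_mul, zero_div, sub_zero] at hbb
    exact hb (dotProduct_self_eq_zero.mp hbb)
  refine ⟨-(∑ i, b i)⁻¹ • (1 + ((∑ i, w i) / 2) • w + ((∑ i, z i) / 2) • z), ?_, ?_, ?_⟩ <;>
    simp only [smul_vecMul, add_vecMul, smul_dotProduct, add_dotProduct,
      one_vecMul_QD_dotProduct, hwb, hzb, hww, hzw, hzz, vecMul_QD_dotProduct_comm w z,
      smul_eq_mul] <;>
    field_simp <;> ring

theorem exists_QD_apply_eq (M : Matrix (Fin 4) (Fin 3) ℝ)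
    (hM : Mᵀ * QD * M = diagonal ![0, 2, 2]) (hb : Mᵀ 0 ≠ 0) :
    ∃ (v : Fin 4 → ℝ) (t : ℝ), ∀ i j, QD i j =
      v i * M j 0 + M i 0 * v j - t * (M i 0 * M j 0) + (M i 1 * M j 1 + M i 2 * M j 2) / 2 := by
  have hgram (k l : Fin 3) : Mᵀ k ᵥ* QD ⬝ᵥ Mᵀ l = diagonal ![0, 2, 2] k l := by
    rw [← hM, ← mul_mul_transpose_apply, transpose_transpose]
  obtain ⟨v, hvb, hvw, hvz⟩ := exists_vecMul_QD_dotProduct_eq hb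
    (by simpa using hgram 0 0) (by simpa using hgram 1 0) (by simpa using hgram 2 0)
    (by simpa using hgram 1 1) (by simpa using hgram 2 1) (by simpa using hgram 2 2)
  set t := v ᵥ* QD ⬝ᵥ v
  set R : Matrix (Fin 4) (Fin 4) ℝ := ![v, Mᵀ 0, Mᵀ 1, Mᵀ 2]
  have hR : Rᵀᵀ * QD * Rᵀ = !![t, 1, 0, 0; 1, 0, 0, 0; 0, 0, 2, 0; 0, 0, 0, 2] := by
    rw [transpose_transpose]
    ext k l
    rw [mul_mul_transpose_apply]
    fin_cases k <;> fin_cases l <;> simp [R, t, hgram, hvb, hvw, hvz, vecMul_QD_dotProduct_comm _ v]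
  have hH : !![0, 1, 0, 0; 1, -t, 0, 0; 0, 0, 1/2, 0; 0, 0, 0, 1/2] *
      !![t, 1, 0, 0; 1, 0, 0, 0; 0, 0, 2, 0; 0, 0, 0, 2] = (1 : Matrix (Fin 4) (Fin 4) ℝ) := by
    ext k l
    fin_cases k <;> fin_cases l <;> simp [mul_apply, Fin.sum_univ_four, one_apply]
  refine ⟨v, t, fun i j => ?_⟩
  rw [← mul_mul_transpose_eq_of_transpose_mul_mul_eq QD_mul_self hR hH]
  simp only [mul_apply, Fin.sum_univ_four, transpose_apply]
  simp only [R, of_apply, cons_val', cons_val, cons_val_zero, cons_val_one, cons_val_fin_one,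
    transpose_apply]
  ring

/-- **Extended Descartes Theorem (converse direction).**
If a real `4 × 3` matrix `M` satisfies `Mᵀ * QD * M = diag(0,2,2)` and every entry
of its first column is nonzero, then, setting `b i := M i 0` and
`x i := (M i 1 / b i, M i 2 / b i)`, the four oriented circles with curvature `b i`
and center `x i` are pairwise tangent with compatible orientations:
`‖x i - x j‖² = (1 / b i + 1 / b j)²` for all `i ≠ j`. -/
theorem descartes_configuration_of_curvature_center_matrix
    (M : Matrix (Fin 4) (Fin 3) ℝ)
    (hM : Mᵀ * QD * M = Matrix.diagonal ![0, 2, 2])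
    (hcol : ∀ i, M i 0 ≠ 0) :
    ∀ i j, i ≠ j →
      (M i 1 / M i 0 - M j 1 / M j 0) ^ 2 + (M i 2 / M i 0 - M j 2 / M j 0) ^ 2
        = (1 / M i 0 + 1 / M j 0) ^ 2 := by
  intro i j hij
  obtain ⟨v, t, hQD⟩ := exists_QD_apply_eq M hM fun h => hcol 0 (congrFun h 0)
  have hii := hQD i i
  have hjj := hQD j j
  have hij' := hQD i j
  rw [QD_apply_self] at hii hjj
  rw [QD_apply_of_ne hij] at hij'
  have hbi := hcol i
  have hbj := hcol j
  field_simp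
  -- `b_j² Q_ii + b_i² Q_jj - 2 b_i b_j Q_ij` does not involve `v` or `t`.
  linear_combination (-2 * M j 0 ^ 2) * hii + (-2 * M i 0 ^ 2) * hjj + (4 * M i 0 * M j 0) * hij'
end

section
/- Let W and W' be real 4×4 matrices satisfying Wᵀ·Q_D·W = Q_W and W'ᵀ·Q_D·W' = Q_W. Then there exists a unique real 4×4 matrix V such that Vᵀ·Q_W·V = Q_W and W'·V = W (equivalently, W' = W·V⁻¹). (The group Aut(Q_W) acts simply transitively on the right on the space of augmented curvature-center coordinate matrices of ordered, oriented Descartes configurations.) -/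
open Matrix

/-- The matrix of the Wilker quadratic form. -/
noncomputable def QW : Matrix (Fin 4) (Fin 4) ℝ :=
  !![0, -4, 0, 0; -4, 0, 0, 0; 0, 0, 2, 0; 0, 0, 0, 2]

/-!
A matrix `W` with `Wᵀ Q W = P`, `P` nondegenerate, is invertible and carries `P` back to `Q`:
`(W⁻¹)ᵀ P W⁻¹ = Q`. Hence for two such matrices `W, W'` the quotient `W'⁻¹ W` preserves `P`,
and it is the only solution of `W' V = W`. The Wilker form is nondegenerate: `det Q_W = -64`.
-/

namespace Matrix

variable {n R : Type*} [Fintype n] [DecidableEq n] [CommRing R]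

theorem isUnit_det_of_transpose_mul_mul_eq {A Q P : Matrix n n R} (h : Aᵀ * Q * A = P)
    (hP : IsUnit P.det) : IsUnit A.det := by
  rw [← h, det_mul, det_mul, det_transpose] at hP
  exact isUnit_of_mul_isUnit_right hP

theorem transpose_nonsing_inv_mul_mul_nonsing_inv_eq {A Q P : Matrix n n R}
    (hA : IsUnit A.det) (h : Aᵀ * Q * A = P) : (A⁻¹)ᵀ * P * A⁻¹ = Q :=
  calc (A⁻¹)ᵀ * P * A⁻¹ = (A * A⁻¹)ᵀ * Q * (A * A⁻¹) := by
        simp only [← h, transpose_mul, mul_assoc]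
    _ = Q := by rw [mul_nonsing_inv A hA, transpose_one, one_mul, mul_one]

theorem existsUnique_transpose_mul_mul_eq_self_and_mul_eq {W W' Q P : Matrix n n R}
    (hW : Wᵀ * Q * W = P) (hW' : W'ᵀ * Q * W' = P) (hP : IsUnit P.det) :
    ∃! V : Matrix n n R, Vᵀ * P * V = P ∧ W' * V = W := by
  have hW'_unit := isUnit_det_of_transpose_mul_mul_eq hW' hP
  refine ⟨W'⁻¹ * W, ⟨?_, mul_nonsing_inv_cancel_left W' W hW'_unit⟩, ?_⟩
  · calc (W'⁻¹ * W)ᵀ * P * (W'⁻¹ * W) = Wᵀ * ((W'⁻¹)ᵀ * P * W'⁻¹) * W := by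
          simp only [transpose_mul, mul_assoc]
      _ = P := by rw [transpose_nonsing_inv_mul_mul_nonsing_inv_eq hW'_unit hW', hW]
  · rintro V ⟨-, rfl⟩
    exact (nonsing_inv_mul_cancel_left W' V hW'_unit).symm

end Matrix

theorem det_QW : QW.det = -64 := by
  simp [QW, det_succ_row_zero, Fin.sum_univ_succ, Fin.succAbove]
  norm_num

/-- `Aut(Q_W)` acts simply transitively on the right on the space of augmented
curvature-center coordinate matrices of ordered, oriented Descartes
configurations: given `W`, `W'` with `Wᵀ·Q_D·W = Q_W` and `W'ᵀ·Q_D·W' = Q_W`,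
there is a unique `V` with `Vᵀ·Q_W·V = Q_W` and `W'·V = W`. -/
theorem autQW_simply_transitive
    (W W' : Matrix (Fin 4) (Fin 4) ℝ)
    (hW : Wᵀ * QD * W = QW) (hW' : W'ᵀ * QD * W' = QW) :
    ∃! V : Matrix (Fin 4) (Fin 4) ℝ, Vᵀ * QW * V = QW ∧ W' * V = W :=
  existsUnique_transpose_mul_mul_eq_self_and_mul_eq hW hW' (by rw [det_QW]; norm_num)
end
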